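/- arXiv:2202.06305 — 7 statements merged into one kernel-verified Lean document; each statement's English description precedes it below -/
import Mathlib

section
/- Let A = {(i, j) ∈ ℤ² : 0 ≤ j ≤ max(i−1, 0)} and define φ: A → A by φ(i, j) = (i, j−1) if j > 0, and φ(i, 0) = (min(i−1, 0), 0). Then the stable subset Stab(φ, A) is empty, while the attractive subset Attrac(φ, A) equals {(i, 0) : i ≤ 0}. -/
/-!
A point `(i, j)` with `i ≥ 1` lies in a column of height `i`, so its preimages under `φⁿ` sit `n`
steps higher in the same column and `n` cannot exceed `i - 1`; hence no such point is attractive.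
Every column drains into `(0, 0)`, whose preimages are therefore arbitrarily deep, and `φ` pushes
`(0, 0)` down the half-axis `{(i, 0) : i ≤ 0}`, which is thus attractive. A stable point has a
whole chain of stable, hence attractive, preimages; on the half-axis each preimage step raises
`i` by one, so the chain eventually leaves it.
-/

/-- The set of stable points: points admitting an infinite chain of preimages. -/
def stableSet {A : Type*} (φ : A → A) : Set A :=
  {a | ∃ s : ℕ → A, s 0 = a ∧ ∀ i : ℕ, φ (s (i + 1)) = s i}

/-- The set of attractive points: points in the image of every iterate. -/
def attracSet {A : Type*} (φ : A → A) : Set A := {a | ∀ i : ℕ, ∃ b, φ^[i] b = a}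

/-- Godelle's example: the set `A = {(i, j) ∈ ℤ² : 0 ≤ j ≤ max (i − 1) 0}`. -/
def GodelleSet : Type := {p : ℤ × ℤ // 0 ≤ p.2 ∧ p.2 ≤ max (p.1 - 1) 0}

/-- Godelle's self-map: `φ(i, j) = (i, j − 1)` for `j > 0` and `φ(i, 0) = (min (i − 1) 0, 0)`. -/
def godelleMap (a : GodelleSet) : GodelleSet :=
  if h : 0 < a.val.2 then
    ⟨(a.val.1, a.val.2 - 1), by have := a.property; constructor <;> omega⟩
  else
    ⟨(min (a.val.1 - 1) 0, 0), by constructor <;> omega⟩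

section General

variable {A : Type*} {φ : A → A}

theorem iterate_apply_eq_of_chain {s : ℕ → A} (hs : ∀ i, φ (s (i + 1)) = s i) (n : ℕ) :
    φ^[n] (s n) = s 0 := by
  induction n with
  | zero => rfl
  | succ n ih => rw [Function.iterate_succ_apply, hs, ih]

theorem stableSet_subset_attracSet : stableSet φ ⊆ attracSet φ := by
  rintro a ⟨s, rfl, hs⟩ n
  exact ⟨s n, iterate_apply_eq_of_chain hs n⟩

theorem chain_mem_stableSet {s : ℕ → A} (hs : ∀ i, φ (s (i + 1)) = s i) (k : ℕ) :
    s k ∈ stableSet φ :=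
  ⟨fun i => s (k + i), rfl, fun i => hs (k + i)⟩

theorem mapsTo_attracSet : Set.MapsTo φ (attracSet φ) (attracSet φ) := by
  intro a ha n
  obtain ⟨b, hb⟩ := ha n
  exact ⟨φ b, by rw [← Function.iterate_succ_apply, Function.iterate_succ_apply', hb]⟩

end General

namespace GodelleSet

theorem snd_nonneg (a : GodelleSet) : 0 ≤ a.val.2 := a.property.1

theorem snd_le (a : GodelleSet) : a.val.2 ≤ max (a.val.1 - 1) 0 := a.property.2

theorem snd_eq_zero_of_fst_nonpos {a : GodelleSet} (ha : a.val.1 ≤ 0) : a.val.2 = 0 := by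
  have := a.snd_nonneg
  have := a.snd_le
  omega

end GodelleSet

theorem godelleMap_val_of_snd_pos {a : GodelleSet} (h : 0 < a.val.2) :
    (godelleMap a).val = (a.val.1, a.val.2 - 1) := by
  erw [godelleMap, dif_pos h]

theorem godelleMap_val_of_snd_eq_zero {a : GodelleSet} (h : a.val.2 = 0) :
    (godelleMap a).val = (min (a.val.1 - 1) 0, 0) := by
  erw [godelleMap, dif_neg h.not_gt]

theorem godelleMap_val_of_fst_nonpos {a : GodelleSet} (ha : a.val.1 ≤ 0) :
    (godelleMap a).val = (a.val.1 - 1, 0) := by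
  rw [godelleMap_val_of_snd_eq_zero (a.snd_eq_zero_of_fst_nonpos ha), min_eq_left (by omega)]

theorem iterate_godelleMap_val_of_le_snd (a : GodelleSet) {n : ℕ} (hn : (n : ℤ) ≤ a.val.2) :
    (godelleMap^[n] a).val = (a.val.1, a.val.2 - n) := by
  induction n with
  | zero => simp
  | succ n ih =>
    have ih := ih (by omega)
    rw [Function.iterate_succ_apply', godelleMap_val_of_snd_pos (by rw [ih]; push_cast at hn; omega),
      ih]
    congr 1
    push_cast
    ring

theorem iterate_godelleMap_val_of_fst_nonpos (a : GodelleSet) (ha : a.val.1 ≤ 0) (n : ℕ) :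
    (godelleMap^[n] a).val = (a.val.1 - n, 0) := by
  induction n with
  | zero => ext <;> simp [a.snd_eq_zero_of_fst_nonpos ha]
  | succ n ih =>
    rw [Function.iterate_succ_apply', godelleMap_val_of_fst_nonpos (by rw [ih]; dsimp only; omega),
      ih]
    congr 1
    push_cast
    ring

theorem eq_of_godelleMap_eq_of_one_le_fst {a b : GodelleSet} (h : godelleMap b = a)
    (ha : 1 ≤ a.val.1) : b.val = (a.val.1, a.val.2 + 1) := by
  subst h
  by_cases hb : 0 < b.val.2
  · rw [godelleMap_val_of_snd_pos hb]
    ext <;> simp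
  · rw [godelleMap_val_of_snd_eq_zero (by have := b.snd_nonneg; omega)] at ha
    simp at ha

theorem eq_of_iterate_godelleMap_eq_of_one_le_fst {a b : GodelleSet} {n : ℕ}
    (h : godelleMap^[n] b = a) (ha : 1 ≤ a.val.1) : b.val = (a.val.1, a.val.2 + n) := by
  induction n generalizing a with
  | zero => subst h; simp
  | succ n ih =>
    rw [Function.iterate_succ_apply'] at h
    have hstep := eq_of_godelleMap_eq_of_one_le_fst h ha
    rw [ih rfl (by rw [hstep]; exact ha), hstep]
    congr 1
    push_cast
    ring

theorem fst_nonpos_of_mem_attracSet {a : GodelleSet} (ha : a ∈ attracSet godelleMap) :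
    a.val.1 ≤ 0 := by
  by_contra! hpos
  obtain ⟨b, hb⟩ := ha a.val.1.toNat
  have hcol := eq_of_iterate_godelleMap_eq_of_one_le_fst hb hpos
  have := a.snd_nonneg
  have := b.snd_le
  rw [hcol] at this
  dsimp only at this
  omega

theorem mem_attracSet_of_fst_nonpos (a : GodelleSet) (ha : a.val.1 ≤ 0) :
    a ∈ attracSet godelleMap := by
  let origin : GodelleSet := ⟨(0, 0), by norm_num⟩
  -- the column over `i + 1` reaches `(0, 0)` after exactly `i + 1` steps
  have h_origin : origin ∈ attracSet godelleMap := by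
    intro i
    let top : GodelleSet := ⟨(i + 1, i), by constructor <;> omega⟩
    have hfoot : (godelleMap^[i] top).val = ((i : ℤ) + 1, 0) :=
      (iterate_godelleMap_val_of_le_snd top le_rfl).trans (by simp [top])
    refine ⟨godelleMap top, Subtype.ext ?_⟩
    rw [← Function.iterate_succ_apply, Function.iterate_succ_apply',
      godelleMap_val_of_snd_eq_zero (by rw [hfoot]), hfoot]
    simp [origin]
  convert mapsTo_attracSet.iterate (-a.val.1).toNat h_origin
  apply Subtype.ext
  rw [iterate_godelleMap_val_of_fst_nonpos origin le_rfl]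
  ext
  · change a.val.1 = 0 - ((-a.val.1).toNat : ℤ)
    omega
  · exact a.snd_eq_zero_of_fst_nonpos ha

theorem attracSet_godelleMap :
    attracSet godelleMap = {a : GodelleSet | a.val.1 ≤ 0 ∧ a.val.2 = 0} := by
  ext a
  constructor
  · intro ha
    have hfst := fst_nonpos_of_mem_attracSet ha
    exact ⟨hfst, a.snd_eq_zero_of_fst_nonpos hfst⟩
  · rintro ⟨ha, -⟩
    exact mem_attracSet_of_fst_nonpos a ha

theorem stableSet_godelleMap : stableSet godelleMap = ∅ := by
  refine Set.eq_empty_of_forall_notMem fun a ⟨s, _, hs⟩ => ?_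
  have hfst (k : ℕ) : (s k).val.1 ≤ 0 :=
    fst_nonpos_of_mem_attracSet (stableSet_subset_attracSet (chain_mem_stableSet hs k))
  have hclimb (k : ℕ) : (s k).val.1 = (s 0).val.1 + k := by
    induction k with
    | zero => simp
    | succ k ih =>
      have := congrArg (·.val.1) (hs k)
      simp only [godelleMap_val_of_fst_nonpos (hfst (k + 1))] at this
      push_cast
      omega
  have := hclimb (1 - (s 0).val.1).toNat
  have := hfst (1 - (s 0).val.1).toNat
  omega

theorem stmt3 :
    stableSet godelleMap = ∅ ∧
      attracSet godelleMap = {a : GodelleSet | a.val.1 ≤ 0 ∧ a.val.2 = 0} :=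
  ⟨stableSet_godelleMap, attracSet_godelleMap⟩
end

section
/- Let V be a vector space over a field k and φ: V → V a k-linear map with dim_k(ker φ) ≤ 1. If V is infinite-dimensional or ker φ = 0, then Stab(φ, V) = Attrac(φ, V), i.e., every element lying in the image of φ^i for all i ∈ ℕ admits an infinite chain of successive preimages. -/
/-- A nontrivial submodule of a rank-≤1 module equals it. -/
lemma aux_sub_eq {k V : Type*} [Field k] [AddCommGroup V] [Module k V]
    {M N : Submodule k V} (hle : N ≤ M) (hM : Module.rank k M ≤ 1) (hN : N ≠ ⊥) :
    N = M := by
  obtain ⟨v₀, hv₀⟩ := rank_le_one_iff.1 hM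
  obtain ⟨x, hxN, hx0⟩ := Submodule.exists_mem_ne_zero_of_ne_bot hN
  -- x = r • v₀ with r ≠ 0, so v₀ ∈ N
  obtain ⟨r, hr⟩ := hv₀ ⟨x, hle hxN⟩
  have hr0 : r ≠ 0 := by
    rintro rfl; apply hx0
    have := congrArg (Subtype.val) hr
    simpa using this.symm
  have hv₀N : (v₀ : V) ∈ N := by
    have : (v₀ : V) = r⁻¹ • x := by
      have := congrArg (Subtype.val) hr
      simp only [Submodule.coe_smul] at this
      rw [← this, smul_smul, inv_mul_cancel₀ hr0, one_smul]
    rw [this]; exact N.smul_mem _ hxN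
  apply le_antisymm hle
  intro y hy
  obtain ⟨s, hs⟩ := hv₀ ⟨y, hy⟩
  have : y = s • (v₀ : V) := by
    have := congrArg (Subtype.val) hs
    simpa using this.symm
  rw [this]; exact N.smul_mem _ hv₀N

lemma aux_exists_pre {k V : Type*} [Field k] [AddCommGroup V] [Module k V]
    (φ : V →ₗ[k] V) (hker : Module.rank k (LinearMap.ker φ) ≤ 1)
    (v : V) (hv : v ∈ attracSet (⇑φ)) : ∃ u ∈ attracSet (⇑φ), φ u = v := by
  classical
  set D : ℕ → Submodule k V := fun j => LinearMap.ker φ ⊓ LinearMap.range (φ ^ j) with hD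
  have hDle : ∀ j, D j ≤ LinearMap.ker φ := fun j => inf_le_left
  have hrmono : ∀ {i j : ℕ}, i ≤ j →
      LinearMap.range (φ ^ j) ≤ LinearMap.range (φ ^ i) := by
    intro i j hij
    obtain ⟨m, rfl⟩ := Nat.exists_eq_add_of_le hij
    rw [pow_add]
    exact LinearMap.range_comp_le_range _ _
  have hmono : ∀ {i j : ℕ}, i ≤ j → D j ≤ D i := fun hij =>
    inf_le_inf le_rfl (hrmono hij)
  -- stabilization
  have hstab : ∃ J, ∀ j, J ≤ j → D j = D J := by
    by_cases hbot : ∃ J, D J = ⊥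
    · obtain ⟨J, hJ⟩ := hbot
      exact ⟨J, fun j hj => by
        rw [hJ]; exact le_bot_iff.1 (hJ ▸ hmono hj)⟩
    · push_neg at hbot
      refine ⟨0, fun j _ => ?_⟩
      have h1 : D j = LinearMap.ker φ := aux_sub_eq (hDle j) hker (hbot j)
      have h2 : D 0 = LinearMap.ker φ := aux_sub_eq (hDle 0) hker (hbot 0)
      rw [h1, h2]
  obtain ⟨J, hJ⟩ := hstab
  -- the fibers T j = φ⁻¹ v ∩ range (φ^j) are nonempty
  have hT : ∀ j, ∃ u, φ u = v ∧ u ∈ LinearMap.range (φ ^ j) := by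
    intro j
    obtain ⟨b, hb⟩ := hv (j + 1)
    refine ⟨φ^[j] b, ?_, ⟨b, ?_⟩⟩
    · rw [Function.iterate_succ_apply'] at hb; exact hb
    · rw [Module.End.pow_apply]
  obtain ⟨u, hu, huJ⟩ := hT J
  refine ⟨u, ?_, hu⟩
  intro j
  rcases le_total j J with hjJ | hJj
  · obtain ⟨b, hb⟩ := huJ
    obtain ⟨m, rfl⟩ := Nat.exists_eq_add_of_le hjJ
    refine ⟨φ^[m] b, ?_⟩
    rw [← Function.iterate_add_apply]
    rw [Module.End.pow_apply] at hb
    exact hb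
  · -- u ∈ range φ^j since u - u' ∈ D J = D j for u' ∈ T j
    obtain ⟨u', hu', hu'j⟩ := hT j
    have hdiff : u - u' ∈ D J := by
      constructor
      · simp [LinearMap.mem_ker, map_sub, hu, hu']
      · exact Submodule.sub_mem _ huJ (hrmono hJj hu'j)
    rw [← hJ j hJj] at hdiff
    have : u ∈ LinearMap.range (φ ^ j) := by
      have h1 : u - u' ∈ LinearMap.range (φ ^ j) := (inf_le_right : D j ≤ _) hdiff
      have := Submodule.add_mem _ h1 hu'j
      simpa using this
    obtain ⟨b, hb⟩ := this
    exact ⟨b, by rw [← Module.End.pow_apply]; exact hb⟩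

theorem stmt4 {k V : Type*} [Field k] [AddCommGroup V] [Module k V]
    (φ : V →ₗ[k] V) (hker : Module.rank k (LinearMap.ker φ) ≤ 1)
    (h : ¬ FiniteDimensional k V ∨ LinearMap.ker φ = ⊥) :
    stableSet (⇑φ) = attracSet (⇑φ) := by
  classical
  ext a
  constructor
  · rintro ⟨s, hs0, hs⟩ i
    refine ⟨s i, ?_⟩
    induction i with
    | zero => simpa using hs0
    | succ n ih =>
      rw [Function.iterate_succ_apply, hs n, ih]
  · intro ha
    -- build the chain using choice
    have key := aux_exists_pre φ hker
    let f : {v : V // v ∈ attracSet (⇑φ)} → {v : V // v ∈ attracSet (⇑φ)} := fun v =>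
      ⟨(key v.1 v.2).choose, (key v.1 v.2).choose_spec.1⟩
    have hf : ∀ v : {v : V // v ∈ attracSet (⇑φ)}, φ (f v).1 = v.1 := fun v =>
      (key v.1 v.2).choose_spec.2
    let t : ℕ → {v : V // v ∈ attracSet (⇑φ)} := fun n => f^[n] ⟨a, ha⟩
    refine ⟨fun n => (t n).1, rfl, fun i => ?_⟩
    show φ (t (i + 1)).1 = (t i).1
    have ht : t (i + 1) = f (t i) := Function.iterate_succ_apply' f i _
    rw [ht, hf]
end

section
/- For any differential field (K, δ) of characteristic zero, the stable subset Stab(δ, K) equals the attractive subset Attrac(δ, K) = ⋂_{i∈ℕ} δ^i(K). That is, an element f lies in the image of δ^i for every i ∈ ℕ if and only if there exists a sequence {g_i} in K with g_0 = f and δ(g_{i+1}) = g_i for all i. -/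
section Aux

variable {K : Type*} [Field K] (δ : K → K)
  (hadd : ∀ a b : K, δ (a + b) = δ a + δ b)
  (hmul : ∀ a b : K, δ (a * b) = a * δ b + b * δ a)

include hadd in
lemma aux_d0 : δ 0 = 0 := by
  have h := hadd 0 0
  simp only [add_zero] at h
  linear_combination -h

include hadd in
lemma aux_dsub : ∀ a b : K, δ (a - b) = δ a - δ b := by
  intro a b
  have hneg : δ (-b) = - δ b := by
    have h := hadd b (-b)
    rw [add_neg_cancel, aux_d0 δ hadd] at h
    linear_combination -h
  rw [sub_eq_add_neg, hadd, hneg, sub_eq_add_neg]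

include hadd in
lemma aux_itsub : ∀ (i : ℕ) (a b : K), δ^[i] (a - b) = δ^[i] a - δ^[i] b := by
  intro i
  induction i with
  | zero => simp
  | succ n ih =>
    intro a b
    rw [Function.iterate_succ_apply, aux_dsub δ hadd, ih,
      Function.iterate_succ_apply, Function.iterate_succ_apply]

include hadd hmul in
lemma aux_constmul : ∀ (i : ℕ) (c x : K), δ c = 0 → δ^[i] (c * x) = c * δ^[i] x := by
  intro i
  induction i with
  | zero => simp
  | succ n ih =>
    intro c x hc
    rw [Function.iterate_succ_apply, hmul, hc, mul_zero, add_zero,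
      Function.iterate_succ_apply, ih _ _ hc]

lemma aux_mono {i j : ℕ} (hij : i ≤ j) {v : K} (h : ∃ x, δ^[j] x = v) :
    ∃ y, δ^[i] y = v := by
  obtain ⟨x, hx⟩ := h
  obtain ⟨k, rfl⟩ := Nat.exists_eq_add_of_le hij
  exact ⟨δ^[k] x, by rw [← Function.iterate_add_apply]; exact hx⟩

include hadd hmul in
lemma aux_dinv {c : K} (hc : δ c = 0) (hne : c ≠ 0) : δ c⁻¹ = 0 := by
  have h1 : δ 1 = 0 := by
    have h := hmul 1 1
    simp only [one_mul, mul_one] at h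
    linear_combination -h
  have h := hmul c c⁻¹
  rw [mul_inv_cancel₀ hne, h1, hc, mul_zero, add_zero] at h
  exact (mul_eq_zero.mp h.symm).resolve_left hne

include hadd hmul in
/-- Key step: if `f` lies in every image `δ^i(K)`, then `f` has an antiderivative that
also lies in every image. -/
lemma aux_step (f : K) (hf : ∀ i, ∃ g, δ^[i] g = f) :
    ∃ g, δ g = f ∧ ∀ i, ∃ x, δ^[i] x = g := by
  choose h hh using fun i => hf (i + 1)
  set g : ℕ → K := fun i => δ^[i] (h i) with hgdef
  have hg1 : ∀ i, δ (g i) = f := fun i => by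
    show δ (δ^[i] (h i)) = f
    rw [← Function.iterate_succ_apply' δ i (h i)]
    exact hh i
  have hgim : ∀ i, ∃ x, δ^[i] x = g i := fun i => ⟨h i, rfl⟩
  by_cases hc : ∀ i, ∃ x, δ^[i] x = g 0
  · exact ⟨g 0, hg1 0, hc⟩
  · push_neg at hc
    obtain ⟨j, hj⟩ := hc
    refine ⟨g j, hg1 j, fun i => ?_⟩
    rcases le_or_gt i j with h1 | h1
    · exact aux_mono δ h1 (hgim j)
    · -- i > j : show g i = g j, then use hgim i
      have hC : δ (g i - g j) = 0 := by
        rw [aux_dsub δ hadd, hg1, hg1, sub_self]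
      by_cases hne : g i - g j = 0
      · have heq : g i = g j := sub_eq_zero.mp hne
        rw [← heq]; exact hgim i
      · exfalso
        -- c := g i - g j is a nonzero constant in im δ^j
        set c : K := g i - g j with hcdef
        have hcim : ∃ x, δ^[j] x = c := by
          obtain ⟨x, hx⟩ := aux_mono δ h1.le (hgim i)
          obtain ⟨y, hy⟩ := hgim j
          exact ⟨x - y, by rw [aux_itsub δ hadd, hx, hy]⟩
        -- c₀ := g j - g 0 is a constant
        have hC0 : δ (g j - g 0) = 0 := by
          rw [aux_dsub δ hadd, hg1, hg1, sub_self]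
        -- (g j - g 0) = ((g j - g 0) * c⁻¹) * c ∈ im δ^j
        have hconst : δ ((g j - g 0) * c⁻¹) = 0 := by
          rw [hmul, hC0, aux_dinv δ hadd hmul hC hne, mul_zero, mul_zero, add_zero]
        obtain ⟨x, hx⟩ := hcim
        have hin : ∃ y, δ^[j] y = g j - g 0 := by
          refine ⟨((g j - g 0) * c⁻¹) * x, ?_⟩
          rw [aux_constmul δ hadd hmul j _ _ hconst, hx,
            mul_assoc, inv_mul_cancel₀ hne, mul_one]
        obtain ⟨y, hy⟩ := hin
        obtain ⟨z, hz⟩ := hgim j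
        exact hj (z - y) (by rw [aux_itsub δ hadd, hz, hy]; ring)

end Aux

/-- In a differential field `(K, δ)` of characteristic zero, the stable subset equals
the attractive subset: `f` lies in the image of `δ^i` for every `i` iff `f` admits an
infinite chain of successive antiderivatives. -/
theorem stmt6 {K : Type*} [Field K] [CharZero K] (δ : K → K)
    (hadd : ∀ a b : K, δ (a + b) = δ a + δ b)
    (hmul : ∀ a b : K, δ (a * b) = a * δ b + b * δ a)
    (f : K) :
    (∀ i : ℕ, ∃ g : K, δ^[i] g = f) ↔
      (∃ s : ℕ → K, s 0 = f ∧ ∀ i : ℕ, δ (s (i + 1)) = s i) := by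
  constructor
  · intro hf
    have next : ∀ x : {x : K // ∀ i, ∃ g, δ^[i] g = x},
        ∃ y : {x : K // ∀ i, ∃ g, δ^[i] g = x}, δ y.1 = x.1 := fun x => by
      obtain ⟨g, hg, hg2⟩ := aux_step δ hadd hmul x.1 x.2
      exact ⟨⟨g, hg2⟩, hg⟩
    choose F hF using next
    refine ⟨fun n => (F^[n] ⟨f, hf⟩).1, rfl, fun i => ?_⟩
    show δ (F^[i + 1] ⟨f, hf⟩).1 = (F^[i] ⟨f, hf⟩).1
    rw [Function.iterate_succ_apply' F i]
    exact hF _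
  · rintro ⟨s, hs0, hs⟩ i
    refine ⟨s i, ?_⟩
    induction i with
    | zero => simpa using hs0
    | succ n ih => rw [Function.iterate_succ_apply, hs n]; exact ih
end

section
/- Let (K, δ) be a regular differential field of characteristic zero (so δ(x) = 1 for some x ∈ K). Then f ∈ K is stable in (K, δ) if and only if δ(f) is stable in (K, δ). -/
/-- In a regular differential field `(K, δ)` of characteristic zero, an element `f`
is stable iff its derivative `δ f` is stable. -/
theorem stmt8 {K : Type*} [Field K] [CharZero K] (δ : K → K)
    (hadd : ∀ a b : K, δ (a + b) = δ a + δ b)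
    (hmul : ∀ a b : K, δ (a * b) = a * δ b + b * δ a)
    (hreg : ∃ x : K, δ x = 1) (f : K) :
    (∃ s : ℕ → K, s 0 = f ∧ ∀ i : ℕ, δ (s (i + 1)) = s i) ↔
      (∃ s : ℕ → K, s 0 = δ f ∧ ∀ i : ℕ, δ (s (i + 1)) = s i) := by
  obtain ⟨x, hx⟩ := hreg
  have h0 : δ 0 = 0 := by
    have h := hadd 0 0
    rw [add_zero] at h
    exact (add_eq_left.mp h.symm)
  have h1 : δ 1 = 0 := by
    have h := hmul 1 1
    simp only [mul_one, one_mul] at h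
    exact (add_eq_left.mp h.symm)
  have hneg : ∀ a : K, δ (-a) = - δ a := by
    intro a
    have h := hadd a (-a)
    rw [add_neg_cancel, h0] at h
    linear_combination -h
  have hsub : ∀ a b : K, δ (a - b) = δ a - δ b := by
    intro a b
    rw [sub_eq_add_neg, hadd, hneg, sub_eq_add_neg]
  have hnat : ∀ n : ℕ, δ (n : K) = 0 := by
    intro n
    induction n with
    | zero => simpa using h0
    | succ k ih => push_cast; rw [hadd, ih, h1, add_zero]
  have hinv : ∀ a : K, δ a = 0 → δ a⁻¹ = 0 := by
    intro a ha
    rcases eq_or_ne a 0 with rfl | hne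
    · simpa using h0
    · have h := hmul a a⁻¹
      rw [mul_inv_cancel₀ hne, h1, ha, mul_zero, add_zero] at h
      exact (mul_eq_zero.mp h.symm).resolve_left hne
  have hcmul : ∀ c y : K, δ c = 0 → δ (c * y) = c * δ y := by
    intro c y hc
    rw [hmul, hc, mul_zero, add_zero]
  have hpow : ∀ n : ℕ, δ (x ^ (n + 1)) = (n + 1 : K) * x ^ n := by
    intro n
    induction n with
    | zero => simpa using hx
    | succ k ih =>
        have : x ^ (k + 2) = x * x ^ (k + 1) := by ring
        rw [this, hmul, ih, hx]
        push_cast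
        ring
  constructor
  · rintro ⟨s, hs0, hs⟩
    refine ⟨fun i => δ (s i), ?_, fun i => ?_⟩
    · show δ (s 0) = δ f; rw [hs0]
    · show δ (δ (s (i + 1))) = δ (s i); rw [hs i]
  · rintro ⟨t, ht0, ht⟩
    set c : K := t 1 - f with hc_def
    have hc : δ c = 0 := by
      rw [hc_def, hsub, ht 0, ht0, sub_self]
    have hfacne : ∀ n : ℕ, ((n.factorial : K)) ≠ 0 := by
      intro n
      exact_mod_cast Nat.cast_ne_zero.mpr (Nat.factorial_ne_zero n)
    have hdn : ∀ n : ℕ, δ (c / (n.factorial : K)) = 0 := by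
      intro n
      rw [div_eq_mul_inv, hcmul _ _ hc, hinv _ (hnat _), mul_zero]
    refine ⟨fun n => t (n + 1) - (c / (n.factorial : K)) * x ^ n, ?_, ?_⟩
    · simp [hc_def]
    · intro i
      rw [hsub, ht, hcmul _ _ (hdn (i + 1)), hpow]
      have key : (c / ((i + 1).factorial : K)) * ((i + 1 : K) * x ^ i)
          = (c / (i.factorial : K)) * x ^ i := by
        have hi1 : ((i : K) + 1) ≠ 0 := by exact_mod_cast Nat.succ_ne_zero i
        have h2 : ((i.factorial : K)) ≠ 0 := hfacne i
        have h3 : (((i + 1).factorial : K)) = ((i : K) + 1) * (i.factorial : K) := by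
          rw [Nat.factorial_succ]; push_cast; ring
        rw [h3]
        field_simp
      rw [key]
end

section
/- Let (K, δ) be a differential field of characteristic zero with δ(x) = 1 for some x ∈ K. Then f ∈ K is stable (lies in δ^n(K) for all n ∈ ℕ) if and only if for every i ∈ ℕ there exists g_i ∈ K with x^i·f = δ(g_i). -/
/-- Let `(K, δ)` be a differential field of characteristic zero with `δ x = 1`. Then
`f ∈ K` is stable (lies in `δ^n(K)` for all `n`) iff for every `i ∈ ℕ` there exists
`g ∈ K` with `x^i * f = δ g`. -/
theorem stmt11 {K : Type*} [Field K] [CharZero K] (δ : K → K)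
    (hadd : ∀ a b : K, δ (a + b) = δ a + δ b)
    (hmul : ∀ a b : K, δ (a * b) = a * δ b + b * δ a)
    (x : K) (hx : δ x = 1) (f : K) :
    (∀ n : ℕ, ∃ g : K, δ^[n] g = f) ↔ (∀ i : ℕ, ∃ g : K, x ^ i * f = δ g) := by
  have hd0 : δ 0 = 0 := by
    have h := hadd 0 0
    rw [add_zero] at h
    nth_rewrite 1 [← add_zero (δ 0)] at h
    exact (add_left_cancel h).symm
  have hneg : ∀ a : K, δ (-a) = -δ a := by
    intro a
    have h := hadd a (-a)
    rw [add_neg_cancel, hd0] at h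
    exact eq_neg_of_add_eq_zero_right h.symm
  have hsub : ∀ a b : K, δ (a - b) = δ a - δ b := by
    intro a b
    rw [sub_eq_add_neg, hadd, hneg, sub_eq_add_neg]
  have hnat : ∀ (n : ℕ) (a : K), δ ((n : K) * a) = (n : K) * δ a := by
    intro n
    induction n with
    | zero => intro a; simp [hd0]
    | succ m ih =>
        intro a
        push_cast
        rw [add_mul, one_mul, hadd, ih, add_mul, one_mul]
  have hdiv : ∀ (n : ℕ) (a : K), (n : K) ≠ 0 → δ ((n : K)⁻¹ * a) = (n : K)⁻¹ * δ a := by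
    intro n a hn
    have h := hnat n ((n : K)⁻¹ * a)
    rw [← mul_assoc, mul_inv_cancel₀ hn, one_mul] at h
    rw [h, ← mul_assoc, inv_mul_cancel₀ hn, one_mul]
  have hpow : ∀ n : ℕ, δ (x ^ (n + 1)) = ((n : K) + 1) * x ^ n := by
    intro n
    induction n with
    | zero => simp [hx]
    | succ m ih =>
        rw [pow_succ, hmul, ih, hx]
        push_cast
        ring
  constructor
  · -- stable → all x^i * f derivatives
    intro hstable i
    -- key lemma by induction on i
    have key : ∀ (j : ℕ) (g : K), ∃ h : K, x ^ j * δ^[j + 1] g = δ h := by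
      intro j
      induction j with
      | zero => intro g; exact ⟨g, by simp⟩
      | succ m ih =>
          intro g
          obtain ⟨h', hh'⟩ := ih g
          refine ⟨x ^ (m + 1) * δ^[m + 1] g - ((m : K) + 1) * h', ?_⟩
          rw [hsub, hmul, hpow]
          have hc : δ (((m : K) + 1) * h') = ((m : K) + 1) * δ h' := by
            have := hnat (m + 1) h'
            push_cast at this
            exact this
          rw [hc, ← hh']
          have hit : δ^[m + 1 + 1] g = δ (δ^[m + 1] g) :=
            Function.iterate_succ_apply' δ (m + 1) g
          rw [hit]
          ring
    obtain ⟨g, hg⟩ := hstable (i + 1)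
    obtain ⟨h, hh⟩ := key i g
    exact ⟨h, by rw [← hg]; exact hh⟩
  · -- all x^i * f derivatives → stable
    intro H
    have main : ∀ (n : ℕ) (f : K), (∀ i : ℕ, ∃ g : K, x ^ i * f = δ g) →
        ∃ g : K, δ^[n] g = f := by
      intro n
      induction n with
      | zero => intro f hf; exact ⟨f, rfl⟩
      | succ m ih =>
          intro f hf
          obtain ⟨g0, hg0⟩ := hf 0
          rw [pow_zero, one_mul] at hg0
          have hg0' : ∀ i : ℕ, ∃ h : K, x ^ i * g0 = δ h := by
            intro i
            obtain ⟨gi, hgi⟩ := hf (i + 1)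
            have hne : ((i : K) + 1) ≠ 0 := by
              exact_mod_cast (Nat.cast_add_one_ne_zero i : ((i : K) + 1) ≠ 0)
            refine ⟨((i : K) + 1)⁻¹ * (x ^ (i + 1) * g0 - gi), ?_⟩
            have hw : δ (x ^ (i + 1) * g0 - gi) = ((i : K) + 1) * (x ^ i * g0) := by
              rw [hsub, hmul, hpow, ← hg0, ← hgi]
              ring
            have hinv : δ (((i : K) + 1)⁻¹ * (x ^ (i + 1) * g0 - gi)) =
                ((i : K) + 1)⁻¹ * δ (x ^ (i + 1) * g0 - gi) := by
              have := hdiv (i + 1) (x ^ (i + 1) * g0 - gi) (by push_cast; exact hne)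
              push_cast at this
              exact this
            rw [hinv, hw, ← mul_assoc, inv_mul_cancel₀ hne, one_mul]
          obtain ⟨g, hg⟩ := ih g0 hg0'
          refine ⟨g, ?_⟩
          rw [Function.iterate_succ_apply', hg, hg0]
    exact fun n => main n f H
end

section
/- Let (F(t), δ) be a monomial extension of (F, δ) and f ∈ F(t). If f is stable in (F(t), δ) (i.e., f ∈ δ^n(F(t)) for all n ∈ ℕ), then ν_p(f) ≥ 0 for every irreducible normal polynomial p ∈ F[t]; equivalently, every irreducible factor of the denominator of f is special (gcd(p, δ(p)) = p). -/
/-- `ordAt p f m` states that the order of the rational function `f ∈ F(t)` at the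
irreducible polynomial `p` is `m`, i.e. `f = p^m * a / b` with `a, b` coprime and both
prime to `p`. -/
def ordAt {F : Type*} [Field F] (p : Polynomial F) (f : RatFunc F) (m : ℤ) : Prop :=
  ∃ a b : Polynomial F, b ≠ 0 ∧ IsCoprime a b ∧ ¬ p ∣ a ∧ ¬ p ∣ b ∧
    f = (algebraMap (Polynomial F) (RatFunc F) p) ^ m *
          algebraMap (Polynomial F) (RatFunc F) a / algebraMap (Polynomial F) (RatFunc F) b

/-- In a monomial extension `(F(t), δ)` of `(F, δ)`, if `f` is stable (lies in
`δ^n(F(t))` for all `n`), then `ν_p f ≥ 0` for every irreducible normal polynomial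
`p ∈ F[t]`; equivalently, every irreducible factor of the denominator of `f` is
special, i.e. divides its own derivative. -/
theorem stmt14 {F : Type*} [Field F] [CharZero F]
    (δ : RatFunc F → RatFunc F)
    (hadd : ∀ a b : RatFunc F, δ (a + b) = δ a + δ b)
    (hmul : ∀ a b : RatFunc F, δ (a * b) = a * δ b + b * δ a)
    (δP : Polynomial F → Polynomial F)
    (hcompat : ∀ q : Polynomial F,
      δ (algebraMap (Polynomial F) (RatFunc F) q) =
        algebraMap (Polynomial F) (RatFunc F) (δP q))
    (f : RatFunc F) (hstable : ∀ n : ℕ, ∃ g : RatFunc F, δ^[n] g = f) :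
    (∀ p : Polynomial F, Irreducible p → IsCoprime p (δP p) →
      ∀ m : ℤ, ordAt p f m → 0 ≤ m) ∧
    (∀ p : Polynomial F, Irreducible p → p ∣ f.denom → p ∣ δP p) := by
  set A := algebraMap (Polynomial F) (RatFunc F) with hA
  have hinj : Function.Injective A := RatFunc.algebraMap_injective F
  -- δP satisfies Leibniz, via injectivity
  have hPmul : ∀ a b : Polynomial F, δP (a * b) = a * δP b + b * δP a := by
    intro a b
    apply hinj
    rw [← hcompat, map_mul, hmul, hcompat, hcompat, map_add, map_mul, map_mul]
  -- power rule for δP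
  have hPpow : ∀ (x : Polynomial F) (n : ℕ),
      δP (x ^ (n + 1)) = ((n + 1 : ℕ) : Polynomial F) * x ^ n * δP x := by
    intro x n
    induction n with
    | zero => simp
    | succ n ih =>
      have : x ^ (n + 2) = x * x ^ (n + 1) := by ring
      rw [this, hPmul, ih]
      push_cast
      ring
  -- quotient rule
  have quot : ∀ a b : Polynomial F, b ≠ 0 →
      δ (A a / A b) = A (δP a * b - a * δP b) / A (b * b) := by
    intro a b hb
    have hb' : A b ≠ 0 := fun h => hb (hinj (by simpa using h))
    have h1 : A a / A b * A b = A a := div_mul_cancel₀ _ hb'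
    have h2 := hmul (A a / A b) (A b)
    rw [h1, hcompat, hcompat] at h2
    have h2' : A (δP a) * A b = A a * A (δP b) + A b * δ (A a / A b) * A b := by
      field_simp at h2; linear_combination h2
    rw [map_sub, map_mul, map_mul, map_mul, eq_div_iff (mul_ne_zero hb' hb')]
    linear_combination -h2'
  -- main statement: normality forces nonnegative order
  have main : ∀ p : Polynomial F, Irreducible p → ¬ p ∣ δP p →
      ∀ m : ℤ, ordAt p f m → 0 ≤ m := by
    intro p hp hnd m hord
    by_contra hm
    push_neg at hm
    have hpr : Prime p := hp.prime
    have hp0 : p ≠ 0 := hp.ne_zero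
    have hAp : A p ≠ 0 := fun h => hp0 (hinj (by simpa using h))
    set i : ℕ := (-m).toNat with hi
    have hi1 : 1 ≤ i := by omega
    have hmi : m = -(i : ℤ) := by omega
    obtain ⟨a, b, hb0, hcab, hpa, hpb, hf⟩ := hord
    have hAb : A b ≠ 0 := fun h => hb0 (hinj (by simpa using h))
    have hf' : f = A a / (A p ^ i * A b) := by
      rw [hf, hmi, zpow_neg, zpow_natCast, inv_mul_eq_div, div_div]
    -- local predicates
    set Pos : RatFunc F → Prop :=
      fun g => ∃ c d : Polynomial F, ¬ p ∣ d ∧ d ≠ 0 ∧ g = A c / A d with hPos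
    set Neg : ℕ → RatFunc F → Prop :=
      fun j g => ∃ c d : Polynomial F,
        ¬ p ∣ c ∧ ¬ p ∣ d ∧ d ≠ 0 ∧ g = A c / (A p ^ j * A d) with hNeg
    have pos_step : ∀ g, Pos g → Pos (δ g) := by
      intro g ⟨c, d, hpd, hd0, hge⟩
      refine ⟨δP c * d - c * δP d, d * d,
        fun h => hpd ((hpr.dvd_mul.mp h).elim id id), mul_ne_zero hd0 hd0, ?_⟩
      rw [hge, quot c d hd0]
    have neg_step : ∀ j g, 1 ≤ j → Neg j g → Neg (j + 1) (δ g) := by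
      intro j g hj ⟨c, d, hpc, hpd, hd0, hge⟩
      obtain ⟨i0, rfl⟩ : ∃ i0, j = i0 + 1 := ⟨j - 1, by omega⟩
      set D : Polynomial F := p ^ (i0 + 1) * d with hD
      have hD0 : D ≠ 0 := mul_ne_zero (pow_ne_zero _ hp0) hd0
      have hgD : g = A c / A D := by rw [hge, hD, map_mul, map_pow]
      set c' : Polynomial F :=
        p * (δP c * d - c * δP d) - ((i0 + 1 : ℕ) : Polynomial F) * (c * (d * δP p))
        with hc'
      have hnum : δP c * D - c * δP D = p ^ i0 * c' := by
        rw [hD, hPmul, hPpow, hc']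
        ring
      have hden : D * D = p ^ i0 * (p ^ (i0 + 1 + 1) * (d * d)) := by
        rw [hD]; ring
      have hpc' : ¬ p ∣ c' := by
        intro hdvd
        have h1 : p ∣ ((i0 + 1 : ℕ) : Polynomial F) * (c * (d * δP p)) := by
          have : ((i0 + 1 : ℕ) : Polynomial F) * (c * (d * δP p)) =
              p * (δP c * d - c * δP d) - c' := by rw [hc']; ring
          rw [this]
          exact dvd_sub (Dvd.intro _ rfl) hdvd
        rcases hpr.dvd_mul.mp h1 with h2 | h2
        · have hu : IsUnit ((i0 + 1 : ℕ) : Polynomial F) := by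
            rw [← Polynomial.C_eq_natCast]
            exact Polynomial.isUnit_C.mpr
              (isUnit_iff_ne_zero.mpr (Nat.cast_ne_zero.mpr (by omega)))
          exact hp.not_isUnit (isUnit_of_dvd_unit h2 hu)
        · rcases hpr.dvd_mul.mp h2 with h3 | h3
          · exact hpc h3
          · rcases hpr.dvd_mul.mp h3 with h4 | h4
            · exact hpd h4
            · exact hnd h4
      refine ⟨c', d * d, hpc',
        fun h => hpd ((hpr.dvd_mul.mp h).elim id id), mul_ne_zero hd0 hd0, ?_⟩
      rw [hgD, quot c D hD0, hnum, hden, map_mul, map_mul,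
        mul_div_mul_left _ _ (fun h => (pow_ne_zero i0 hp0) (hinj (by simpa using h))),
        map_mul, map_pow]
    have pos_iter : ∀ (n : ℕ) (g), Pos g → Pos (δ^[n] g) := by
      intro n
      induction n with
      | zero => intro g h; simpa using h
      | succ n ih =>
        intro g h
        rw [Function.iterate_succ_apply']
        exact pos_step _ (ih g h)
    have neg_iter : ∀ (n : ℕ) (j) (g), 1 ≤ j → Neg j g → Neg (j + n) (δ^[n] g) := by
      intro n
      induction n with
      | zero => intro j g _ h; simpa using h
      | succ n ih =>
        intro j g hj h
        rw [Function.iterate_succ_apply']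
        have := neg_step (j + n) _ (by omega) (ih j g hj h)
        simpa [add_assoc] using this
    have cross : ∀ x y u v : Polynomial F, y ≠ 0 → v ≠ 0 →
        A x / A y = A u / A v → x * v = u * y := by
      intro x y u v hy hv h
      have hy' : A y ≠ 0 := fun hh => hy (hinj (by simpa using hh))
      have hv' : A v ≠ 0 := fun hh => hv (hinj (by simpa using hh))
      rw [div_eq_div_iff hy' hv'] at h
      exact hinj (by rw [map_mul, map_mul]; exact h)
    have tri : ∀ g : RatFunc F, Pos g ∨ ∃ j, 1 ≤ j ∧ Neg j g := by
      intro g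
      by_cases hpd : p ∣ g.denom
      · right
        obtain ⟨j, d, hd, hden⟩ := WfDvdMonoid.max_power_factor (g.denom_ne_zero) hp
        have hd0 : d ≠ 0 := by
          intro h; exact g.denom_ne_zero (by rw [hden, h, mul_zero])
        have hj : 1 ≤ j := by
          rcases Nat.eq_zero_or_pos j with h | h
          · exfalso; apply hd; rwa [hden, h, pow_zero, one_mul] at hpd
          · omega
        have hpnum : ¬ p ∣ g.num := fun h =>
          hp.not_isUnit ((RatFunc.isCoprime_num_denom g).isUnit_of_dvd' h hpd)
        refine ⟨j, hj, g.num, d, hpnum, hd, hd0, ?_⟩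
        conv_lhs => rw [← RatFunc.num_div_denom g, hden, map_mul, map_pow]
      · left
        exact ⟨g.num, g.denom, hpd, g.denom_ne_zero, (RatFunc.num_div_denom g).symm⟩
    obtain ⟨g, hg⟩ := hstable i
    rcases tri g with hPg | ⟨j, hj, hNg⟩
    · have hPf : Pos f := by rw [← hg]; exact pos_iter i g hPg
      obtain ⟨c, d, hpd, hd0, hfe⟩ := hPf
      have hcr : c * (p ^ i * b) = a * d := by
        apply cross c d a (p ^ i * b) hd0 (mul_ne_zero (pow_ne_zero _ hp0) hb0)
        rw [← hfe, hf', map_mul, map_pow]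
      have hdvd : p ∣ a * d := by
        rw [← hcr]
        exact Dvd.dvd.mul_left (Dvd.dvd.mul_right (dvd_pow_self p (by omega)) b) c
      rcases hpr.dvd_mul.mp hdvd with h | h
      · exact hpa h
      · exact hpd h
    · have hNf : Neg (j + i) f := by rw [← hg]; exact neg_iter i j g hj hNg
      obtain ⟨c, d, hpc, hpd, hd0, hfe⟩ := hNf
      have hcr : c * (p ^ i * b) = a * (p ^ (j + i) * d) := by
        apply cross c (p ^ (j + i) * d) a (p ^ i * b)
          (mul_ne_zero (pow_ne_zero _ hp0) hd0)
          (mul_ne_zero (pow_ne_zero _ hp0) hb0)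
        · rw [map_mul, map_pow, map_mul, map_pow, ← hfe, ← hf']
      have hcb : c * b = a * (p ^ j * d) := by
        apply mul_left_cancel₀ (pow_ne_zero i hp0)
        have : p ^ (j + i) = p ^ j * p ^ i := pow_add p j i
        linear_combination hcr - a * d * this
      have hdvd : p ∣ c * b := by
        rw [hcb]
        exact Dvd.dvd.mul_left (Dvd.dvd.mul_right (dvd_pow_self p (by omega)) d) a
      rcases hpr.dvd_mul.mp hdvd with h | h
      · exact hpc h
      · exact hpb h
  constructor
  · intro p hp hcop m hord
    exact main p hp (fun hd => hp.not_isUnit (hcop.isUnit_of_dvd' dvd_rfl hd)) m hord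
  · intro p hp hdvd
    by_contra hnd
    have hp0 : p ≠ 0 := hp.ne_zero
    obtain ⟨j, d, hd, hden⟩ := WfDvdMonoid.max_power_factor (f.denom_ne_zero) hp
    have hd0 : d ≠ 0 := by
      intro h; exact f.denom_ne_zero (by rw [hden, h, mul_zero])
    have hj : 1 ≤ j := by
      rcases Nat.eq_zero_or_pos j with h | h
      · exfalso; apply hd; rwa [hden, h, pow_zero, one_mul] at hdvd
      · omega
    have hpnum : ¬ p ∣ f.num := fun h =>
      hp.not_isUnit ((RatFunc.isCoprime_num_denom f).isUnit_of_dvd' h hdvd)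
    have hcop' : IsCoprime f.num d :=
      (RatFunc.isCoprime_num_denom f).of_isCoprime_of_dvd_right ⟨p ^ j, by rw [hden]; ring⟩
    have hord : ordAt p f (-(j : ℤ)) := by
      refine ⟨f.num, d, hd0, hcop', hpnum, hd, ?_⟩
      rw [zpow_neg, zpow_natCast, inv_mul_eq_div, div_div]
      conv_lhs => rw [← RatFunc.num_div_denom f, hden, map_mul, map_pow]
    have := main p hp hnd (-(j : ℤ)) hord
    omega
end

section
/- In the differential field (ℂ(x), d/dx), a rational function f is stable (f ∈ (d/dx)^n(ℂ(x)) for all n ∈ ℕ) if and only if f is a polynomial in ℂ[x]. -/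
/-!
Any derivation of `K(x)` extending `d/dx` on `K[x]` is forced by the quotient rule. If `f` is
not a polynomial, its denominator has a root `a`, i.e. `f` has a pole of some order `k ≥ 1`
at `a`. Differentiation keeps points without pole pole-free and raises the order of an
existing pole by exactly one (in characteristic zero), so any `g` with `g⁽ᵏ⁾ = f` would give
`f` either no pole at `a` or a pole of order `> k`. Conversely, polynomials have polynomial
antiderivatives of every order.
-/

open Polynomial hiding derivative

namespace Polynomial

theorem derivative_surjective {K : Type*} [Field K] [CharZero K] :
    Function.Surjective (derivative : K[X] → K[X]) := by
  intro p
  induction p using Polynomial.induction_on' with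
  | add p q hp hq =>
    obtain ⟨P, rfl⟩ := hp
    obtain ⟨Q, rfl⟩ := hq
    exact ⟨P + Q, derivative_add⟩
  | monomial n c =>
    refine ⟨C (c / (n + 1)) * X ^ (n + 1), ?_⟩
    rw [derivative_C_mul_X_pow, Nat.add_sub_cancel, Nat.cast_add_one,
      div_mul_cancel₀ _ (Nat.cast_add_one_ne_zero n), C_mul_X_pow_eq_monomial]

end Polynomial

namespace RatFunc

variable {K : Type*} [Field K]

noncomputable def derivative (g : RatFunc K) : RatFunc K :=
  algebraMap K[X] (RatFunc K) (g.num.derivative * g.denom - g.num * g.denom.derivative) /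
    algebraMap K[X] (RatFunc K) (g.denom ^ 2)

theorem eq_derivative_of_leibniz {δ : RatFunc K → RatFunc K}
    (hmul : ∀ a b : RatFunc K, δ (a * b) = a * δ b + b * δ a)
    (hder : ∀ p : K[X], δ (algebraMap K[X] (RatFunc K) p) =
      algebraMap K[X] (RatFunc K) p.derivative) :
    δ = derivative := by
  funext g
  set N := g.num
  set D := g.denom
  have hD : algebraMap K[X] (RatFunc K) D ≠ 0 := algebraMap_ne_zero g.denom_ne_zero
  have hg : g * algebraMap K[X] (RatFunc K) D = algebraMap K[X] (RatFunc K) N := by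
    rw [← g.num_div_denom, div_mul_cancel₀ _ hD]
  have hleibniz := congrArg δ hg
  rw [hmul, hder, hder] at hleibniz
  rw [derivative, map_sub, map_mul, map_mul, map_pow, eq_div_iff (pow_ne_zero 2 hD)]
  linear_combination algebraMap K[X] (RatFunc K) D * hleibniz -
    algebraMap K[X] (RatFunc K) D.derivative * hg

theorem derivative_algebraMap (p : K[X]) :
    derivative (algebraMap K[X] (RatFunc K) p) = algebraMap K[X] (RatFunc K) p.derivative := by
  simp [derivative]

theorem iterate_derivative_algebraMap (n : ℕ) (p : K[X]) :
    derivative^[n] (algebraMap K[X] (RatFunc K) p) =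
      algebraMap K[X] (RatFunc K) (Polynomial.derivative^[n] p) :=
  ((Function.Semiconj.iterate_right (fun q => (derivative_algebraMap q).symm) n) p).symm

theorem rootMultiplicity_denom_of_eq_div {g : RatFunc K} {p q : K[X]} (hq : q ≠ 0)
    (hg : g = algebraMap K[X] (RatFunc K) p / algebraMap K[X] (RatFunc K) q) {a : K}
    (hpa : ¬ p.IsRoot a) : rootMultiplicity a g.denom = rootMultiplicity a q := by
  have hcross : g.num * q = p * g.denom := (num_mul_eq_mul_denom_iff hq).mpr hg
  have hp : p ≠ 0 := fun hp0 => hpa (by simp [hp0])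
  have hne : p * g.denom ≠ 0 := mul_ne_zero hp g.denom_ne_zero
  have hmult := congrArg (rootMultiplicity a) hcross
  rw [rootMultiplicity_mul (hcross ▸ hne), rootMultiplicity_mul hne,
    rootMultiplicity_eq_zero hpa, zero_add] at hmult
  rcases aeval_ne_zero_of_isCoprime g.isCoprime_num_denom a with h | h
  · rw [rootMultiplicity_eq_zero (by simpa using h)] at hmult
    omega
  · rw [rootMultiplicity_eq_zero (p := g.denom) (by simpa using h)] at hmult ⊢
    omega

theorem rootMultiplicity_denom_derivative_of_eq_zero {g : RatFunc K} {a : K}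
    (h : rootMultiplicity a g.denom = 0) : rootMultiplicity a g.derivative.denom = 0 := by
  refine rootMultiplicity_eq_zero fun hroot => ?_
  have hroot_sq : (g.denom ^ 2).IsRoot a := hroot.dvd (denom_div_dvd _ _)
  have hroot_denom : g.denom.IsRoot a := by simpa [IsRoot] using hroot_sq
  exact (rootMultiplicity_pos g.denom_ne_zero).mpr hroot_denom |>.ne' h

theorem rootMultiplicity_denom_derivative_of_pos [CharZero K] {g : RatFunc K} {a : K}
    (h : 0 < rootMultiplicity a g.denom) :
    rootMultiplicity a g.derivative.denom = rootMultiplicity a g.denom + 1 := by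
  have hNa : ¬ g.num.IsRoot a := by
    have hDa : g.denom.IsRoot a := (rootMultiplicity_pos g.denom_ne_zero).mp h
    simpa [hDa.eq_zero] using aeval_ne_zero_of_isCoprime g.isCoprime_num_denom a
  obtain ⟨m, hm⟩ := Nat.exists_eq_add_one.mpr h
  obtain ⟨r, hD, hr⟩ := g.denom.exists_eq_pow_rootMultiplicity_mul_and_not_dvd g.denom_ne_zero a
  set π : K[X] := Polynomial.X - Polynomial.C a with hπ
  have hπ0 : π ≠ 0 := X_sub_C_ne_zero a
  rw [hm] at hD ⊢
  have hra : ¬ r.IsRoot a := fun h => hr (dvd_iff_isRoot.mpr h)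
  set W := π * (g.num.derivative * r - g.num * r.derivative) -
    Polynomial.C ((m : K) + 1) * g.num * r
  have hWa : ¬ W.IsRoot a := by
    simp only [W, hπ, IsRoot, Polynomial.eval_sub, Polynomial.eval_mul, Polynomial.eval_X,
      Polynomial.eval_C, sub_self, zero_mul, zero_sub, neg_eq_zero, mul_eq_zero, not_or]
    exact ⟨⟨Nat.cast_add_one_ne_zero m, hNa⟩, hra⟩
  have hnum : g.num.derivative * g.denom - g.num * g.denom.derivative = π ^ m * W := by
    rw [hD]
    simp only [W, hπ, Polynomial.derivative_mul, derivative_X_sub_C_pow, Nat.add_sub_cancel]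
    push_cast
    ring
  have hden : g.denom ^ 2 = π ^ m * (r ^ 2 * π ^ (m + 2)) := by
    rw [hD]
    ring
  have hg' : g.derivative = algebraMap K[X] (RatFunc K) W /
      algebraMap K[X] (RatFunc K) (r ^ 2 * π ^ (m + 2)) := by
    rw [derivative, hnum, hden, map_mul, map_mul,
      mul_div_mul_left _ _ (algebraMap_ne_zero (pow_ne_zero _ hπ0))]
  have hr2 : r ^ 2 ≠ 0 := pow_ne_zero 2 fun h0 => hra (by simp [h0])
  rw [rootMultiplicity_denom_of_eq_div (mul_ne_zero hr2 (pow_ne_zero _ hπ0)) hg' hWa,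
    rootMultiplicity_mul_X_sub_C_pow hr2, rootMultiplicity_eq_zero (by simpa [IsRoot] using hra),
    zero_add]

theorem rootMultiplicity_denom_iterate_derivative_of_eq_zero {g : RatFunc K} {a : K}
    (h : rootMultiplicity a g.denom = 0) (n : ℕ) :
    rootMultiplicity a (derivative^[n] g).denom = 0 := by
  induction n with
  | zero => exact h
  | succ n ih =>
    rw [Function.iterate_succ_apply']
    exact rootMultiplicity_denom_derivative_of_eq_zero ih

theorem rootMultiplicity_denom_iterate_derivative_of_pos [CharZero K] {g : RatFunc K} {a : K}
    (h : 0 < rootMultiplicity a g.denom) (n : ℕ) :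
    rootMultiplicity a (derivative^[n] g).denom = rootMultiplicity a g.denom + n := by
  induction n with
  | zero => rfl
  | succ n ih =>
    rw [Function.iterate_succ_apply', rootMultiplicity_denom_derivative_of_pos (by omega), ih,
      add_assoc]

theorem forall_exists_iterate_derivative_eq_iff [CharZero K] [IsAlgClosed K] (f : RatFunc K) :
    (∀ n : ℕ, ∃ g : RatFunc K, derivative^[n] g = f) ↔
      ∃ p : K[X], f = algebraMap K[X] (RatFunc K) p := by
  constructor
  · intro hstable
    by_contra hpoly
    have hdenom : f.denom ≠ 1 := fun h1 => hpoly ⟨f.num, by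
      conv_lhs => rw [← f.num_div_denom, h1, map_one, div_one]⟩
    obtain ⟨a, ha⟩ := IsAlgClosed.exists_root f.denom (f.monic_denom.degree_pos.mpr hdenom).ne'
    set k := rootMultiplicity a f.denom
    have hpole : 0 < k := (rootMultiplicity_pos f.denom_ne_zero).mpr ha
    obtain ⟨g, hg⟩ := hstable k
    rcases (rootMultiplicity a g.denom).eq_zero_or_pos with hg0 | hg0
    · have := rootMultiplicity_denom_iterate_derivative_of_eq_zero hg0 k
      rw [hg] at this
      omega
    · have := rootMultiplicity_denom_iterate_derivative_of_pos hg0 k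
      rw [hg] at this
      omega
  · rintro ⟨p, rfl⟩ n
    obtain ⟨q, rfl⟩ := Polynomial.derivative_surjective.iterate n p
    exact ⟨algebraMap K[X] (RatFunc K) q, iterate_derivative_algebraMap n q⟩

end RatFunc

theorem stmt15_general (δ : RatFunc ℂ → RatFunc ℂ)
    (hmul : ∀ a b : RatFunc ℂ, δ (a * b) = a * δ b + b * δ a)
    (hder : ∀ p : Polynomial ℂ,
      δ (algebraMap (Polynomial ℂ) (RatFunc ℂ) p) =
        algebraMap (Polynomial ℂ) (RatFunc ℂ) (Polynomial.derivative p))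
    (f : RatFunc ℂ) :
    (∀ n : ℕ, ∃ g : RatFunc ℂ, δ^[n] g = f) ↔
      ∃ p : Polynomial ℂ, f = algebraMap (Polynomial ℂ) (RatFunc ℂ) p := by
  obtain rfl := RatFunc.eq_derivative_of_leibniz hmul hder
  exact RatFunc.forall_exists_iterate_derivative_eq_iff f

/-- In the differential field `(ℂ(x), d/dx)`, a rational function `f` is stable
(admits antiderivatives of all orders in `ℂ(x)`) iff `f` is a polynomial. -/
theorem stmt15 (δ : RatFunc ℂ → RatFunc ℂ)
    (hadd : ∀ a b : RatFunc ℂ, δ (a + b) = δ a + δ b)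
    (hmul : ∀ a b : RatFunc ℂ, δ (a * b) = a * δ b + b * δ a)
    (hder : ∀ p : Polynomial ℂ,
      δ (algebraMap (Polynomial ℂ) (RatFunc ℂ) p) =
        algebraMap (Polynomial ℂ) (RatFunc ℂ) (Polynomial.derivative p))
    (f : RatFunc ℂ) :
    (∀ n : ℕ, ∃ g : RatFunc ℂ, δ^[n] g = f) ↔
      ∃ p : Polynomial ℂ, f = algebraMap (Polynomial ℂ) (RatFunc ℂ) p :=
  stmt15_general δ hmul hder f
end
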